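/- For all indices i ∈ Fin a, j, j' ∈ Fin b, k, k' ∈ Fin c, l ∈ Fin d and signs s, t, r ∈ G: E_{j',k',r}(Q(e(i,j,s), e(k,l,t))) = (1/2)·(if j = j' ∧ k = k' then 1 else 0)·e(i,l, r·s·t). Hence, performing the joint entangled measurement on subsystems B and C of the product of the entangled states (ij)_s and (kl)_t yields, for each sign outcome r with probability 1/2, the entangled pure state (il)_{r·s·t} of the two remote systems A and D: entanglement swapping is possible in BCT (Eq. (5.1)). -/
import Mathlib


/-- The sign group `{+1, -1}` under multiplication. -/
abbrev G : Type := ℤˣ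

/-- The quadripartite composite space
`Z = ℝ^(Fin a × Fin b × Fin c × Fin d × G × G × G)`, whose standard basis vector
at `(i,j,k,l,s₁,s₂,s₃)` encodes the pure state `(((ij)_{s₁}k)_{s₂}l)_{s₃}`. -/
abbrev Z (a b c d : ℕ) : Type := Fin a × Fin b × Fin c × Fin d × G × G × G → ℝ

/-- Parallel composition of two bipartite states: the bilinear map with
`Q(e(i,j,s), e(k,l,t)) = (1/2)·∑_{u∈G} F(i,j,k,l,s,u,u·t)`. -/
noncomputable def Q (a b c d : ℕ) (w : Fin a × Fin b × G → ℝ)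
    (v : Fin c × Fin d × G → ℝ) : Z a b c d :=
  fun q => w (q.1, q.2.1, q.2.2.2.2.1) *
    v (q.2.2.1, q.2.2.2.1, q.2.2.2.2.2.1 * q.2.2.2.2.2.2) / 2

/-- Conditioning on the entangled `BC`-effect `(j'k')_r`: the linear map
`E_{j',k',r} : Z → ℝ^(Fin a × Fin d × G)` with
`E_{j',k',r}(F(i,j,k,l,s₁,s₂,s₃)) = [j = j' ∧ k = k' ∧ s₁·s₂ = r]·e(i,l,s₃)`. -/
noncomputable def Emap (a b c d : ℕ) (j' : Fin b) (k' : Fin c) (r : G) :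
    Z a b c d →ₗ[ℝ] (Fin a × Fin d × G → ℝ) where
  toFun w := fun p => ∑ u : G, w (p.1, j', k', p.2.1, u, u * r, p.2.2)
  map_add' := by
    intro x y
    funext p
    simp [Finset.sum_add_distrib]
  map_smul' := by
    intro s x
    funext p
    simp [Finset.mul_sum, mul_add]

/-- Entanglement swapping in BCT (Eq. (5.1)): the joint entangled measurement on
subsystems `B` and `C` of the product of the entangled states `(ij)_s` and
`(kl)_t` yields, for each sign outcome `r` with probability `1/2`, the entangled
pure state `(il)_{r·s·t}` of the two remote systems `A` and `D`. -/
theorem bct_entanglement_swapping (a b c d : ℕ)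
    (ha : 0 < a) (hb : 0 < b) (hc : 0 < c) (hd : 0 < d)
    (i : Fin a) (j j' : Fin b) (k k' : Fin c) (l : Fin d) (s t r : G) :
    Emap a b c d j' k' r
        (Q a b c d (Pi.single (i, j, s) 1) (Pi.single (k, l, t) 1)) =
      (1 / 2 : ℝ) • (if j = j' ∧ k = k' then
        (Pi.single (i, l, r * s * t) 1 : Fin a × Fin d × G → ℝ) else 0) := by
  funext p
  obtain ⟨x, y, z⟩ := p
  have key : s * r * z = t ↔ z = r * s * t := by
    rw [← eq_inv_mul_iff_mul_eq, mul_inv_rev, Int.units_inv_eq_self,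
      Int.units_inv_eq_self]
  simp only [Emap, Q, LinearMap.coe_mk, AddHom.coe_mk, Pi.single_apply, Pi.smul_apply,
    smul_eq_mul]
  rw [Finset.sum_eq_single s]
  · by_cases hj : j = j' <;> by_cases hk : k = k'
    · subst hj; subst hk
      by_cases hz : z = r * s * t
      · subst hz
        have h2 : s * r * (r * s * t) = t := by
          rw [← mul_assoc, ← mul_assoc, mul_assoc s r r, Int.units_mul_self, mul_one,
            Int.units_mul_self, one_mul]
        rw [h2]
        by_cases hx : x = i <;> by_cases hy : y = l <;>
          simp [hx, hy, Pi.single_apply, Prod.ext_iff]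
      · have hz' : ¬ t = s * r * z := fun h => hz (key.mp h.symm)
        simp [hz, hz', Prod.ext_iff, eq_comm, Pi.single_apply]
    · simp [hj, hk, Prod.ext_iff, eq_comm, Pi.single_apply]
    · simp [hj, hk, Prod.ext_iff, eq_comm, Pi.single_apply]
    · simp [hj, hk, Prod.ext_iff, eq_comm, Pi.single_apply]
  · intro u _ hu
    simp [Prod.ext_iff, hu, Pi.single_apply]
  · intro hs
    exact absurd (Finset.mem_univ s) hs
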